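/- Equal-cost states get equal amplitudes: let F ⊆ {0,1}^n be nonempty, obj : F → ℝ a cost function, and define the phase separator U_P(γ) acting diagonally by (U_P(γ)ψ)_f = e^{-iγ·obj(f)} ψ_f for f ∈ F, and the Grover mixer U_M(β) = Id − (1−e^{-iβ})|F⟩⟨F|. Then for any sequence of angles γ₁,β₁,…,γ_p,β_p, the final state ψ = U_M(β_p)U_P(γ_p)⋯U_M(β₁)U_P(γ₁)|F⟩ satisfies: ψ_z = 0 for z ∉ F, and ψ_x = ψ_y whenever x, y ∈ F with obj(x) = obj(y). -/
import Mathlib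


open scoped BigOperators

/-- The equal superposition `|F⟩` of the basis states indexed by `F`. -/
noncomputable def feasibleState (n : ℕ) (F : Finset (Fin n → Bool)) :
    (Fin n → Bool) → ℂ :=
  fun z => if z ∈ F then ((Real.sqrt F.card : ℂ))⁻¹ else 0

/-- The Grover mixer `U_M(β) = Id − (1 − e^{-iβ})|F⟩⟨F|`. -/
noncomputable def groverMixer (n : ℕ) (F : Finset (Fin n → Bool)) (β : ℝ)
    (ψ : (Fin n → Bool) → ℂ) : (Fin n → Bool) → ℂ :=
  fun z => ψ z - (1 - Complex.exp (-Complex.I * (β : ℂ))) *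
    (∑ f ∈ F, (starRingEnd ℂ) (feasibleState n F f) * ψ f) * feasibleState n F z

/-- The phase separator `U_P(γ)`, acting diagonally with phases `e^{-iγ·obj(z)}`. -/
noncomputable def phaseSep (n : ℕ) (γ : ℝ) (obj : (Fin n → Bool) → ℝ)
    (ψ : (Fin n → Bool) → ℂ) : (Fin n → Bool) → ℂ :=
  fun z => Complex.exp (-Complex.I * (γ : ℂ) * (obj z : ℂ)) * ψ z

/-- `p` GM-QAOA rounds applied to the starting state `|F⟩`. -/
noncomputable def gmqaoaState (n : ℕ) (F : Finset (Fin n → Bool))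
    (obj : (Fin n → Bool) → ℝ) (γ β : ℕ → ℝ) : ℕ → ((Fin n → Bool) → ℂ)
  | 0 => feasibleState n F
  | (k + 1) => groverMixer n F (β (k + 1))
      (phaseSep n (γ (k + 1)) obj (gmqaoaState n F obj γ β k))

/-- After any number of GM-QAOA rounds, the state is supported on the feasible set `F`,
and any two feasible basis states with the same objective value have the same amplitude. -/
theorem gmqaoa_equal_amplitudes (n p : ℕ) (F : Finset (Fin n → Bool)) (hF : F.Nonempty)
    (obj : (Fin n → Bool) → ℝ) (γ β : ℕ → ℝ) :
    (∀ z ∉ F, gmqaoaState n F obj γ β p z = 0) ∧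
    (∀ x ∈ F, ∀ y ∈ F, obj x = obj y →
      gmqaoaState n F obj γ β p x = gmqaoaState n F obj γ β p y) := by
  induction p with
  | zero =>
    constructor
    · intro z hz
      simp [gmqaoaState, feasibleState, hz]
    · intro x hx y hy _
      simp [gmqaoaState, feasibleState, hx, hy]
  | succ k ih =>
    obtain ⟨ih1, ih2⟩ := ih
    constructor
    · intro z hz
      simp [gmqaoaState, groverMixer, phaseSep, feasibleState, hz, ih1 z hz]
    · intro x hx y hy hobj
      simp only [gmqaoaState, groverMixer, phaseSep, feasibleState, hx, hy, if_pos, hobj,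
        ih2 x hx y hy hobj]
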